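/- Let K ≥ 1, let B, D be real K×K matrices, let E be an invertible real K×K matrix, and let n_x, n_y ∈ ℝ with n_x² + n_y² = 1. Define the 3K×3K block matrices P = [[I, 0, I], [B + n_x E, −n_y E, B − n_x E], [D + n_y E, n_x E, D − n_y E]] and Q = (1/2)·[[E⁻¹(E − n_x B − n_y D), n_x E⁻¹, n_y E⁻¹], [2 E⁻¹(n_y B − n_x D), −2 n_y E⁻¹, 2 n_x E⁻¹], [E⁻¹(E + n_x B + n_y D), −n_x E⁻¹, −n_y E⁻¹]]. Then P Q = I and Q P = I; in particular P is invertible with P⁻¹ = Q. -/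
import Mathlib


open Matrix BigOperators
set_option maxHeartbeats 1600000

/-- Assemble a `3K × 3K` matrix from a `3 × 3` array of `K × K` blocks. -/
def block3 (K : ℕ) (M : Matrix (Fin 3) (Fin 3) (Matrix (Fin K) (Fin K) ℝ)) :
    Matrix (Fin 3 × Fin K) (Fin 3 × Fin K) ℝ :=
  Matrix.of fun p q => M p.1 q.1 p.2 q.2

lemma block3_mul (K : ℕ) (M N : Matrix (Fin 3) (Fin 3) (Matrix (Fin K) (Fin K) ℝ)) :
    block3 K M * block3 K N = block3 K (M * N) := by
  ext ⟨i, a⟩ ⟨j, b⟩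
  simp only [block3, Matrix.mul_apply, Matrix.of_apply, Matrix.sum_apply]
  rw [Fintype.sum_prod_type]

lemma block3_one (K : ℕ) : block3 K 1 = 1 := by
  ext ⟨i, a⟩ ⟨j, b⟩
  by_cases h : i = j <;> simp [block3, Matrix.one_apply, h, Prod.ext_iff]

lemma block3_smul (K : ℕ) (c : ℝ) (M : Matrix (Fin 3) (Fin 3) (Matrix (Fin K) (Fin K) ℝ)) :
    c • block3 K M = block3 K (c • M) := by
  ext ⟨i, a⟩ ⟨j, b⟩
  simp [block3]

theorem similarity_matrix_inverse
    (K : ℕ) (hK : 1 ≤ K)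
    (B D E : Matrix (Fin K) (Fin K) ℝ) (hE : IsUnit E.det)
    (nx ny : ℝ) (hn : nx ^ 2 + ny ^ 2 = 1)
    (P Q : Matrix (Fin 3 × Fin K) (Fin 3 × Fin K) ℝ)
    (hP : P = block3 K
      !![(1 : Matrix (Fin K) (Fin K) ℝ), 0, 1;
         B + nx • E, -(ny • E), B - nx • E;
         D + ny • E, nx • E, D - ny • E])
    (hQ : Q = (1 / 2 : ℝ) • block3 K
      !![E⁻¹ * (E - nx • B - ny • D), nx • E⁻¹, ny • E⁻¹;
         (2 : ℝ) • (E⁻¹ * (ny • B - nx • D)), (-(2 * ny)) • E⁻¹, (2 * nx) • E⁻¹;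
         E⁻¹ * (E + nx • B + ny • D), (-nx) • E⁻¹, (-ny) • E⁻¹]) :
    P * Q = 1 ∧ Q * P = 1 ∧ P⁻¹ = Q := by
  have hEinv : E⁻¹ * E = 1 := Matrix.nonsing_inv_mul E hE
  have hEinv' : E * E⁻¹ = 1 := Matrix.mul_nonsing_inv E hE
  have hc1 : ∀ X : Matrix (Fin K) (Fin K) ℝ, E⁻¹ * (E * X) = X := fun X => by
    rw [← mul_assoc, hEinv, one_mul]
  have hc2 : ∀ X : Matrix (Fin K) (Fin K) ℝ, E * (E⁻¹ * X) = X := fun X => by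
    rw [← mul_assoc, hEinv', one_mul]
  have hPQ : P * Q = 1 := by
    rw [hP, hQ, Matrix.mul_smul, block3_mul, block3_smul, ← block3_one K]
    refine congrArg (block3 K) ?_
    ext i j : 1
    fin_cases i <;> fin_cases j <;>
      simp [Matrix.mul_apply, Fin.sum_univ_three, Matrix.one_apply] <;>
      simp only [mul_add, mul_sub, add_mul, sub_mul, Matrix.mul_smul, Matrix.smul_mul,
        smul_add, smul_sub, smul_smul, mul_assoc, hc1, hc2, hEinv, hEinv',
        mul_one, one_mul, zero_mul, mul_zero, neg_mul, mul_neg, smul_neg, neg_smul,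
        smul_zero, zero_smul] <;>
      match_scalars <;>
      first
        | ring1
        | linear_combination hn
        | linear_combination -hn
        | linear_combination (1/2)*hn
        | linear_combination (-1/2)*hn
        | linear_combination 2*hn
        | linear_combination (-2)*hn
        | linear_combination (nx^2+ny^2+1)*hn
        | linear_combination (-(nx^2+ny^2+1))*hn
        | linear_combination ((nx^2+ny^2+1)/2)*hn
        | linear_combination (-(nx^2+ny^2+1)/2)*hn
        | linear_combination nx*hn
        | linear_combination ny*hn
        | linear_combination (-nx)*hn
        | linear_combination (-ny)*hn
  have hQP : Q * P = 1 := by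
    rw [hQ, hP, Matrix.smul_mul, block3_mul, block3_smul, ← block3_one K]
    refine congrArg (block3 K) ?_
    ext i j : 1
    fin_cases i <;> fin_cases j <;>
      simp [Matrix.mul_apply, Fin.sum_univ_three, Matrix.one_apply] <;>
      simp only [mul_add, mul_sub, add_mul, sub_mul, Matrix.mul_smul, Matrix.smul_mul,
        smul_add, smul_sub, smul_smul, mul_assoc, hc1, hc2, hEinv, hEinv',
        mul_one, one_mul, zero_mul, mul_zero, neg_mul, mul_neg, smul_neg, neg_smul,
        smul_zero, zero_smul] <;>
      match_scalars <;>
      first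
        | ring1
        | linear_combination hn
        | linear_combination -hn
        | linear_combination (1/2)*hn
        | linear_combination (-1/2)*hn
        | linear_combination 2*hn
        | linear_combination (-2)*hn
        | linear_combination (nx^2+ny^2+1)*hn
        | linear_combination (-(nx^2+ny^2+1))*hn
        | linear_combination ((nx^2+ny^2+1)/2)*hn
        | linear_combination (-(nx^2+ny^2+1)/2)*hn
        | linear_combination nx*hn
        | linear_combination ny*hn
        | linear_combination (-nx)*hn
        | linear_combination (-ny)*hn
  exact ⟨hPQ, hQP, Matrix.inv_eq_right_inv hPQ⟩
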